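/- Discrete entropy inequality: assume Ω is moreover closed, u₀(x) ∈ Ω for a.e. x, and that the CFL condition (Δt/|K|) λ* Σ_{L∈𝒩(K)} |σ_KL| ≤ 1 holds for all K ∈ 𝒯 (which is implied by Δt ≤ a²h/λ* under the mesh regularity). Then the discrete finite volume solution satisfies, for every K ∈ 𝒯 and every n ≥ 0: (|K|/Δt)(η(u_K^{n+1}) − η(u_K^n)) + Σ_{L∈𝒩(K)} |σ_KL| ξ_KL(u_K^n, u_L^n) ≤ 0. -/

import Mathlib

/-!
By `∑_L |σ_KL| n_KL = 0` the scheme can be rewritten as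
`u_K^{n+1} = u + ∑_L c_L (v_L - u)` with `u = u_K^n`, `c_L = Δt λ* |σ_KL| / |K|` and
`v_L = u - (1/λ*)(G_KL(u, u_L^n) - f(u)·n_KL)`. The CFL condition says `∑_L c_L ≤ 1`, so
`u_K^{n+1}` is a convex combination of `u` and the `v_L`, which lie in `Ω` by hypothesis: `Ω` is
invariant (it contains the initial cell averages because it is closed and convex). Since `η` is
convex, Jensen's inequality gives `η(u_K^{n+1}) - η(u) ≤ ∑_L c_L (η(v_L) - η(u))`, and the
entropy flux hypothesis bounds `λ* (η(v_L) - η(u))` by `ξ(u)·n_KL - ξ_KL(u, u_L^n)`; the terms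
`ξ(u)·n_KL` again sum to zero.
-/

open MeasureTheory Metric Set
set_option autoImplicit false
set_option maxHeartbeats 1000000
noncomputable section

/-- `Rs k` is the Euclidean space `ℝ^k`. -/
abbrev Rs (k : ℕ) : Type := EuclideanSpace ℝ (Fin k)

theorem sum_smul_sum_coord_smul_eq_zero {ι κ M : Type*} [Fintype κ] [AddCommGroup M]
    [Module ℝ M] {s : Finset ι} {c : ι → ℝ} {ν : ι → EuclideanSpace ℝ κ}
    (hν : ∑ L ∈ s, c L • ν L = 0) (g : κ → M) :
    ∑ L ∈ s, c L • ∑ α, ν L α • g α = 0 := by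
  calc ∑ L ∈ s, c L • ∑ α, ν L α • g α = ∑ α, (∑ L ∈ s, c L • ν L) α • g α := by
        simp only [Finset.smul_sum, smul_smul, WithLp.ofLp_sum, WithLp.ofLp_smul,
          Finset.sum_apply, Pi.smul_apply, smul_eq_mul, Finset.sum_smul]
        exact Finset.sum_comm
    _ = 0 := by simp [hν]

theorem convexOn_of_convexOn_lineMap {E : Type*} [AddCommGroup E] [Module ℝ E] {s : Set E}
    {f : E → ℝ} (hs : Convex ℝ s)
    (h : ∀ x ∈ s, ∀ y ∈ s, ConvexOn ℝ (Icc 0 1) fun t : ℝ => f (AffineMap.lineMap x y t)) :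
    ConvexOn ℝ s f := by
  refine ⟨hs, fun x hx y hy a b ha hb hab => ?_⟩
  obtain rfl : a = 1 - b := by linarith
  simpa [AffineMap.lineMap_apply_module] using
    (h x hx y hy).2 (left_mem_Icc.2 zero_le_one) (right_mem_Icc.2 zero_le_one) ha hb hab

theorem convexOn_of_fderiv_fderiv_nonneg {E : Type*} [NormedAddCommGroup E] [NormedSpace ℝ E]
    {s V : Set E} {f : E → ℝ} (hs : Convex ℝ s) (hV : IsOpen V) (hsV : s ⊆ V)
    (hf : ContDiffOn ℝ 2 f V) (hf'' : ∀ u ∈ s, ∀ w, 0 ≤ fderiv ℝ (fderiv ℝ f) u w w) :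
    ConvexOn ℝ s f := by
  have hf' : ContDiffOn ℝ 1 (fderiv ℝ f) V := hf.fderiv_of_isOpen hV (by norm_num)
  refine convexOn_of_convexOn_lineMap hs fun x hx y hy => ?_
  have hmem : ∀ t ∈ Icc (0 : ℝ) 1, AffineMap.lineMap x y t ∈ s := fun t ht =>
    hs.lineMap_mem hx hy ht
  have hmemV : ∀ t ∈ interior (Icc (0 : ℝ) 1), AffineMap.lineMap x y t ∈ V := fun t ht =>
    hsV (hmem t (interior_subset ht))
  refine convexOn_of_hasDerivWithinAt2_nonneg (convex_Icc 0 1)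
    (f' := fun t => fderiv ℝ f (AffineMap.lineMap x y t) (y - x))
    (f'' := fun t => fderiv ℝ (fderiv ℝ f) (AffineMap.lineMap x y t) (y - x) (y - x))
    (hf.continuousOn.comp AffineMap.lineMap_continuous.continuousOn fun t ht => hsV (hmem t ht))
    (fun t ht => ?_) (fun t ht => ?_) fun t ht => hf'' _ (hmem t (interior_subset ht)) _
  · have hDf := ((hf.contDiffAt (hV.mem_nhds (hmemV t ht))).differentiableAt
      (by norm_num)).hasFDerivAt
    exact (hDf.comp_hasDerivAt t AffineMap.hasDerivAt_lineMap).hasDerivWithinAt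
  · have hD2f := ((hf'.contDiffAt (hV.mem_nhds (hmemV t ht))).differentiableAt
      one_ne_zero).hasFDerivAt
    simpa using ((hD2f.comp_hasDerivAt t AffineMap.hasDerivAt_lineMap).clm_apply
      (hasDerivAt_const t (y - x))).hasDerivWithinAt

theorem add_sum_smul_sub_eq {ι E : Type*} [AddCommGroup E] [Module ℝ E] (t : Finset ι)
    (c : ι → ℝ) (u : E) (v : ι → E) :
    u + ∑ i ∈ t, c i • (v i - u) = (1 - ∑ i ∈ t, c i) • u + ∑ i ∈ t, c i • v i := by
  simp only [smul_sub, Finset.sum_sub_distrib, ← Finset.sum_smul, sub_smul, one_smul]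
  abel

theorem Convex.add_sum_smul_sub_mem {ι E : Type*} [AddCommGroup E] [Module ℝ E] {s : Set E}
    (hs : Convex ℝ s) {t : Finset ι} {c : ι → ℝ} {u : E} {v : ι → E}
    (hc : ∀ i ∈ t, 0 ≤ c i) (hc₁ : ∑ i ∈ t, c i ≤ 1) (hu : u ∈ s) (hv : ∀ i ∈ t, v i ∈ s) :
    u + ∑ i ∈ t, c i • (v i - u) ∈ s := by
  rw [add_sum_smul_sub_eq]
  simpa using hs.sum_mem (t := t.insertNone) (w := fun j => j.elim (1 - ∑ i ∈ t, c i) c)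
    (z := fun j => j.elim u v) (Finset.forall_mem_insertNone.2 ⟨sub_nonneg.2 hc₁, hc⟩)
    (by simp) (Finset.forall_mem_insertNone.2 ⟨hu, hv⟩)

theorem ConvexOn.map_add_sum_smul_sub_sub_le {ι E : Type*} [AddCommGroup E] [Module ℝ E]
    {s : Set E} {f : E → ℝ} (hf : ConvexOn ℝ s f) {t : Finset ι} {c : ι → ℝ} {u : E}
    {v : ι → E} (hc : ∀ i ∈ t, 0 ≤ c i) (hc₁ : ∑ i ∈ t, c i ≤ 1) (hu : u ∈ s)
    (hv : ∀ i ∈ t, v i ∈ s) :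
    f (u + ∑ i ∈ t, c i • (v i - u)) - f u ≤ ∑ i ∈ t, c i * (f (v i) - f u) := by
  have := hf.map_add_sum_le hc (by ring) hv (sub_nonneg.2 hc₁) hu
  rw [← add_sum_smul_sub_eq] at this
  simp only [smul_eq_mul] at this
  simp only [mul_sub, Finset.sum_sub_distrib, ← Finset.sum_mul]
  linarith

theorem eq_add_sum_smul_sub_of_flux_balance {ι E : Type*} [AddCommGroup E] [Module ℝ E]
    {s : Finset ι} {A : ι → ℝ} {g F : ι → E} {vol Δt lam : ℝ} (hvol : vol ≠ 0) (hlam : lam ≠ 0)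
    (hF : ∑ L ∈ s, A L • F L = 0) {u u' : E}
    (hstep : vol • (u' - u) + Δt • ∑ L ∈ s, A L • g L = 0) :
    u' = u + ∑ L ∈ s, (Δt / vol * lam * A L) • ((u - (1 / lam) • (g L - F L)) - u) := by
  have hincr : u' - u = -(Δt / vol) • ∑ L ∈ s, A L • g L := by
    rw [← smul_right_inj hvol, smul_smul, mul_neg, mul_div_cancel₀ _ hvol, neg_smul]
    exact eq_neg_of_add_eq_zero_left hstep
  have hterm : ∀ L ∈ s, (Δt / vol * lam * A L) • ((u - (1 / lam) • (g L - F L)) - u)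
      = -(Δt / vol) • (A L • g L - A L • F L) := fun L _ => by
    rw [sub_sub_cancel_left, smul_neg, smul_smul, ← smul_sub, smul_smul, neg_mul, neg_smul]
    congr 2
    field_simp
  rw [Finset.sum_congr rfl hterm, ← Finset.smul_sum, Finset.sum_sub_distrib, hF, sub_zero,
    ← hincr, add_sub_cancel]

theorem cell_entropy_inequality {ι : Type*} {s : Finset ι} {A Ξ Φ D : ι → ℝ} {vol Δt lam δ : ℝ}
    (hvol : 0 < vol) (hΔt : 0 < Δt) (hA : ∀ L ∈ s, 0 ≤ A L) (hΦ : ∑ L ∈ s, A L * Φ L = 0)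
    (hδ : δ ≤ ∑ L ∈ s, Δt / vol * lam * A L * D L) (hΞ : ∀ L ∈ s, Ξ L - Φ L ≤ -lam * D L) :
    vol / Δt * δ + ∑ L ∈ s, A L * Ξ L ≤ 0 := by
  have hδ' : vol / Δt * δ ≤ ∑ L ∈ s, A L * (lam * D L) := by
    calc vol / Δt * δ ≤ vol / Δt * ∑ L ∈ s, Δt / vol * lam * A L * D L := by gcongr
      _ = _ := by rw [Finset.mul_sum]; congr! 1 with L; field_simp
  have hΞ' : ∑ L ∈ s, A L * (lam * D L) ≤ ∑ L ∈ s, A L * (Φ L - Ξ L) :=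
    Finset.sum_le_sum fun L hL => mul_le_mul_of_nonneg_left (by linarith [hΞ L hL]) (hA L hL)
  simp only [mul_sub, Finset.sum_sub_distrib, hΦ] at hΞ'
  linarith

theorem discrete_entropy_inequality_general
    (d m : ℕ)
    (Ω : Set (Rs m)) (hΩconv : Convex ℝ Ω)
    (f : Fin d → Rs m → Rs m)
    (hΩcl : IsClosed Ω)
    (η : Rs m → ℝ) (ξ : Fin d → Rs m → ℝ)
    (hη : ∃ V : Set (Rs m), IsOpen V ∧ closure Ω ⊆ V ∧ ContDiffOn ℝ 2 η V)
    (β₀ β₁ : ℝ) (hβ₀ : 0 < β₀)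
    (hHess : ∀ u ∈ closure Ω, ∀ w : Rs m,
      β₀ * ‖w‖ ^ (2 : ℕ) ≤ fderiv ℝ (fderiv ℝ η) u w w ∧ fderiv ℝ (fderiv ℝ η) u w w ≤ β₁ * ‖w‖ ^ (2 : ℕ))
    (ι : Type)
    (Cc : ι → Set (Rs d))
    (hCopen : ∀ K, IsOpen (Cc K)) (hCbdd : ∀ K, Bornology.IsBounded (Cc K))
    (hCne : ∀ K, (Cc K).Nonempty)
    (vol : ι → ℝ) (hvol : ∀ K, vol K = (volume (Cc K)).toReal)
    (Nb : ι → Finset ι)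
    (A : ι → ι → ℝ) (hApos : ∀ K L, L ∈ Nb K → 0 < A K L)
    (ν : ι → ι → Rs d)
    (hνsum : ∀ K, ∑ L ∈ Nb K, A K L • ν K L = 0)
    (lam : ℝ) (hlam : 0 < lam)
    (G : ι → ι → Rs m → Rs m → Rs m)
    (hstab : ∀ lam' : ℝ, lam ≤ lam' → ∀ K L, L ∈ Nb K → ∀ u ∈ Ω, ∀ v ∈ Ω,
      u - (1 / lam') • (G K L u v - ∑ α, ν K L α • f α u) ∈ Ω)
    (Ξ : ι → ι → Rs m → Rs m → ℝ)
    (hΞineq : ∀ lam' : ℝ, lam ≤ lam' → ∀ K L, L ∈ Nb K → ∀ u ∈ Ω, ∀ v ∈ Ω,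
      Ξ K L u v - ∑ α, ν K L α * ξ α u ≤
        -lam' * (η (u - (1 / lam') • (G K L u v - ∑ α, ν K L α • f α u)) - η u))
    (u₀ : Rs d → Rs m)
    (hu₀Ω : ∀ᵐ x ∂(volume : Measure (Rs d)), u₀ x ∈ Ω)
    (Δt : ℝ) (hΔt : 0 < Δt)
    (hu₀int : ∀ K, IntegrableOn u₀ (Cc K))
    (uK : ℕ → ι → Rs m)
    (hinit : ∀ K, uK 0 K = (vol K)⁻¹ • ∫ x in Cc K, u₀ x)
    (hstep : ∀ n K, (vol K) • (uK (n + 1) K - uK n K)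
        + Δt • ∑ L ∈ Nb K, A K L • G K L (uK n K) (uK n L) = 0)
    (hCFLcell : ∀ K, Δt / vol K * lam * ∑ L ∈ Nb K, A K L ≤ 1) :
    ∀ K n, vol K / Δt * (η (uK (n + 1) K) - η (uK n K))
        + ∑ L ∈ Nb K, A K L * Ξ K L (uK n K) (uK n L) ≤ 0 := by
  have hmeas_ne_zero (K : ι) : volume (Cc K) ≠ 0 := ((hCopen K).measure_pos volume (hCne K)).ne'
  have hvol_pos (K : ι) : 0 < vol K := by
    rw [hvol K]
    exact ENNReal.toReal_pos (hmeas_ne_zero K) (hCbdd K).measure_lt_top.ne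
  obtain ⟨V, hV, hΩV, hηV⟩ := hη
  have hηconv : ConvexOn ℝ Ω η :=
    convexOn_of_fderiv_fderiv_nonneg hΩconv hV (subset_closure.trans hΩV) hηV fun u hu w =>
      (by positivity : 0 ≤ β₀ * ‖w‖ ^ 2).trans (hHess u (subset_closure hu) w).1
  have hupdate (n : ℕ) (K : ι) : uK (n + 1) K = uK n K + ∑ L ∈ Nb K, (Δt / vol K * lam * A K L) •
      ((uK n K - (1 / lam) • (G K L (uK n K) (uK n L) - ∑ α, ν K L α • f α (uK n K))) - uK n K) :=
    eq_add_sum_smul_sub_of_flux_balance (hvol_pos K).ne' hlam.ne'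
      (sum_smul_sum_coord_smul_eq_zero (hνsum K) _) (hstep n K)
  have hc (K : ι) : ∀ L ∈ Nb K, 0 ≤ Δt / vol K * lam * A K L := fun L hL => by
    have := hvol_pos K; have := hApos K L hL; positivity
  have hc₁ (K : ι) : ∑ L ∈ Nb K, Δt / vol K * lam * A K L ≤ 1 := by
    rw [← Finset.mul_sum]; exact hCFLcell K
  have hmem (n : ℕ) : ∀ K, uK n K ∈ Ω := by
    induction n with
    | zero =>
      intro K
      rw [hinit K, hvol K, ← measureReal_def, ← setAverage_eq]
      exact hΩconv.set_average_mem hΩcl (hmeas_ne_zero K) (hCbdd K).measure_lt_top.ne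
        (ae_restrict_of_ae hu₀Ω) (hu₀int K)
    | succ n ih =>
      intro K
      rw [hupdate n K]
      exact hΩconv.add_sum_smul_sub_mem (hc K) (hc₁ K) (ih K) fun L hL =>
        hstab lam le_rfl K L hL _ (ih K) _ (ih L)
  intro K n
  refine cell_entropy_inequality (hvol_pos K) hΔt (fun L hL => (hApos K L hL).le)
    (by simpa using sum_smul_sum_coord_smul_eq_zero (hνsum K) fun α => ξ α (uK n K)) ?_
    fun L hL => hΞineq lam le_rfl K L hL _ (hmem n K) _ (hmem n L)
  rw [hupdate n K]
  exact hηconv.map_add_sum_smul_sub_sub_le (hc K) (hc₁ K) (hmem n K) fun L hL =>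
    hstab lam le_rfl K L hL _ (hmem n K) _ (hmem n L)

/-- Discrete entropy inequality (Proposition 2.2, second part). -/
theorem discrete_entropy_inequality
    (d m : ℕ) (hd : 1 ≤ d) (hm : 1 ≤ m)
    (Ω : Set (Rs m)) (hΩconv : Convex ℝ Ω) (hΩbdd : Bornology.IsBounded Ω)
    (f : Fin d → Rs m → Rs m)
    (hf : ∀ α, ∃ V : Set (Rs m), IsOpen V ∧ closure Ω ⊆ V ∧ ContDiffOn ℝ 2 (f α) V)
    (hΩcl : IsClosed Ω)
    (η : Rs m → ℝ) (ξ : Fin d → Rs m → ℝ)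
    (hη : ∃ V : Set (Rs m), IsOpen V ∧ closure Ω ⊆ V ∧ ContDiffOn ℝ 2 η V)
    (hξ : ∀ α, ∃ V : Set (Rs m), IsOpen V ∧ closure Ω ⊆ V ∧ ContDiffOn ℝ 2 (ξ α) V)
    (hηnn : ∀ u ∈ closure Ω, 0 ≤ η u)
    (β₀ β₁ : ℝ) (hβ₀ : 0 < β₀) (hββ : β₀ ≤ β₁)
    (hHess : ∀ u ∈ closure Ω, ∀ w : Rs m,
      β₀ * ‖w‖ ^ (2 : ℕ) ≤ fderiv ℝ (fderiv ℝ η) u w w ∧ fderiv ℝ (fderiv ℝ η) u w w ≤ β₁ * ‖w‖ ^ (2 : ℕ))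
    (hξη : ∀ α, ∀ u ∈ Ω, fderiv ℝ (ξ α) u = (fderiv ℝ η u).comp (fderiv ℝ (f α) u))
    (ι : Type) [DecidableEq ι] [Countable ι]
    (Cc : ι → Set (Rs d))
    (hCopen : ∀ K, IsOpen (Cc K)) (hCbdd : ∀ K, Bornology.IsBounded (Cc K))
    (hCne : ∀ K, (Cc K).Nonempty)
    (hCdisj : Pairwise (Function.onFun Disjoint Cc))
    (hCcover : (⋃ K, closure (Cc K)) = Set.univ)
    (h : ℝ) (hh0 : 0 < h) (hh1 : h ≤ 1)
    (hdiam : ∀ K, Metric.diam (Cc K) ≤ h)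
    (vol : ι → ℝ) (hvol : ∀ K, vol K = (volume (Cc K)).toReal)
    (Nb : ι → Finset ι) (hNsymm : ∀ K L, L ∈ Nb K ↔ K ∈ Nb L) (hNirr : ∀ K, K ∉ Nb K)
    (A : ι → ι → ℝ) (hAsymm : ∀ K L, A K L = A L K) (hApos : ∀ K L, L ∈ Nb K → 0 < A K L)
    (ν : ι → ι → Rs d)
    (hνunit : ∀ K L, L ∈ Nb K → ‖ν K L‖ = 1)
    (hνanti : ∀ K L, L ∈ Nb K → ν L K = -ν K L)
    (hνsum : ∀ K, ∑ L ∈ Nb K, A K L • ν K L = 0)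
    (a : ℝ) (ha : 0 < a)
    (hvolreg : ∀ K, a * h ^ d ≤ vol K)
    (hperim : ∀ K, ∑ L ∈ Nb K, A K L ≤ h ^ (d - 1) / a)
    (lam : ℝ) (hlam : 0 < lam)
    (G : ι → ι → Rs m → Rs m → Rs m)
    (hGlip : ∀ K L, L ∈ Nb K → ∃ CG : NNReal,
      LipschitzOnWith CG (fun p : Rs m × Rs m => G K L p.1 p.2) (Ω ×ˢ Ω))
    (hGcons : ∀ K L, L ∈ Nb K → ∀ u ∈ Ω, ∀ v ∈ Ω, G K L u v = -G L K v u)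
    (hGconsist : ∀ K L, L ∈ Nb K → ∀ u ∈ Ω, G K L u u = ∑ α, ν K L α • f α u)
    (hstab : ∀ lam' : ℝ, lam ≤ lam' → ∀ K L, L ∈ Nb K → ∀ u ∈ Ω, ∀ v ∈ Ω,
      u - (1 / lam') • (G K L u v - ∑ α, ν K L α • f α u) ∈ Ω)
    (Ξ : ι → ι → Rs m → Rs m → ℝ)
    (hΞlip : ∀ K L, L ∈ Nb K → ∃ CΞ : NNReal,
      LipschitzOnWith CΞ (fun p : Rs m × Rs m => Ξ K L p.1 p.2) (Ω ×ˢ Ω))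
    (hΞcons : ∀ K L, L ∈ Nb K → ∀ u ∈ Ω, ∀ v ∈ Ω, Ξ K L u v = -Ξ L K v u)
    (hΞineq : ∀ lam' : ℝ, lam ≤ lam' → ∀ K L, L ∈ Nb K → ∀ u ∈ Ω, ∀ v ∈ Ω,
      Ξ K L u v - ∑ α, ν K L α * ξ α u ≤
        -lam' * (η (u - (1 / lam') • (G K L u v - ∑ α, ν K L α • f α u)) - η u))
    (u₀ : Rs d → Rs m) (hu₀meas : Measurable u₀)
    (hu₀Ω : ∀ᵐ x ∂(volume : Measure (Rs d)), u₀ x ∈ Ω)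
    (Δt : ℝ) (hΔt : 0 < Δt)
    (hu₀int : ∀ K, IntegrableOn u₀ (Cc K))
    (uK : ℕ → ι → Rs m)
    (hinit : ∀ K, uK 0 K = (vol K)⁻¹ • ∫ x in Cc K, u₀ x)
    (hstep : ∀ n K, (vol K) • (uK (n + 1) K - uK n K)
        + Δt • ∑ L ∈ Nb K, A K L • G K L (uK n K) (uK n L) = 0)
    (hCFLcell : ∀ K, Δt / vol K * lam * ∑ L ∈ Nb K, A K L ≤ 1) :
    ∀ K n, vol K / Δt * (η (uK (n + 1) K) - η (uK n K))
        + ∑ L ∈ Nb K, A K L * Ξ K L (uK n K) (uK n L) ≤ 0 :=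
  discrete_entropy_inequality_general d m Ω hΩconv f hΩcl η ξ hη β₀ β₁ hβ₀ hHess ι Cc hCopen hCbdd
    hCne vol hvol Nb A hApos ν hνsum lam hlam G hstab Ξ hΞineq u₀ hu₀Ω Δt hΔt hu₀int uK hinit hstep
    hCFLcell
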